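/- Let n ≥ 2 and let h(2n) be the Lie algebra of polynomial Hamiltonian vector fields on ℂ^{2n}. Then H^2(g_{−1}; h(2n)) ≠ 0, and the nonzero classes are of order 1; concretely: there exists an alternating bilinear map c : g_{−1} × g_{−1} → h(2n), all of whose values lie in g_{−1} (constant-coefficient fields), which satisfies the cocycle identity [A, c(B, C)] − [B, c(A, C)] + [C, c(A, B)] = 0 for all A, B, C ∈ g_{−1}, but is not of the form c(A, B) = [A, b(B)] − [B, b(A)] for any linear map b : g_{−1} → h(2n). -/

import Mathlib

open MvPolynomial

/-- The polynomial algebra `ℂ[x₁, …, xₙ, y₁, …, yₙ]` of functions on `ℂ²ⁿ`. -/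
noncomputable abbrev PolyC2n (n : ℕ) := MvPolynomial (Fin n ⊕ Fin n) ℂ

/-- The Hamiltonian vector field `X_f : g ↦ {f, g}` of a polynomial `f`, as a linear map
into derivations of `ℂ[x, y]`.  Here `Sum.inl i` indexes `xᵢ` and `Sum.inr i` indexes `yᵢ`. -/
noncomputable def hamVF (n : ℕ) : PolyC2n n →ₗ[ℂ] Derivation ℂ (PolyC2n n) (PolyC2n n) where
  toFun f := ∑ i : Fin n,
    (pderiv (Sum.inl i) f • pderiv (Sum.inr i) - pderiv (Sum.inr i) f • pderiv (Sum.inl i))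
  map_add' f g := by
    simp only [map_add, add_smul]
    rw [← Finset.sum_add_distrib]
    exact Finset.sum_congr rfl fun i _ => by abel
  map_smul' r f := by
    simp only [Derivation.map_smul, RingHom.id_apply, Finset.smul_sum, smul_sub, smul_assoc]

/-- `h(2n)`: the Lie algebra of polynomial Hamiltonian vector fields on `ℂ²ⁿ`,
as a subspace of all derivations. -/
noncomputable def hamAlg (n : ℕ) :
    Submodule ℂ (Derivation ℂ (PolyC2n n) (PolyC2n n)) := LinearMap.range (hamVF n)

/-- The constant-coefficient vector field `Σᵢ (uᵢ ∂/∂xᵢ + vᵢ ∂/∂yᵢ)` attached to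
`(u, v) ∈ ℂⁿ × ℂⁿ ≅ ℂ²ⁿ`; these fields form the abelian subalgebra `g₋₁ ⊆ h(2n)`. -/
noncomputable def constVF (n : ℕ) (p : (Fin n → ℂ) × (Fin n → ℂ)) :
    Derivation ℂ (PolyC2n n) (PolyC2n n) :=
  ∑ i : Fin n, (p.1 i • pderiv (Sum.inl i) + p.2 i • pderiv (Sum.inr i))

/-- A polynomial vector field vanishes at the origin if all its coefficient polynomials
`D(xᵢ)`, `D(yᵢ)` have zero constant term. -/
def VanishesAtOrigin {n : ℕ} (D : Derivation ℂ (PolyC2n n) (PolyC2n n)) : Prop :=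
  ∀ s : Fin n ⊕ Fin n, constantCoeff (D (X s)) = 0

-- helper: sum of derivations applied
lemma Derivation.sum_apply' {ι : Type*} (s : Finset ι) {R A M : Type*} [CommSemiring R]
    [CommSemiring A] [Algebra R A] [AddCommMonoid M] [Module R M] [Module A M]
    (D : ι → Derivation R A M) (a : A) : (∑ i ∈ s, D i) a = ∑ i ∈ s, D i a := by
  induction s using Finset.cons_induction with
  | empty => simp
  | cons i s hi ih => simp [Finset.sum_cons, Derivation.add_apply, ih]

/-- basis vectors of `g₋₁` -/
noncomputable def eV (n : ℕ) : (Fin n ⊕ Fin n) → (Fin n → ℂ) × (Fin n → ℂ)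
  | Sum.inl i => (Pi.single i 1, 0)
  | Sum.inr i => (0, Pi.single i 1)

lemma constVF_eV (n : ℕ) (a : Fin n ⊕ Fin n) : constVF n (eV n a) = pderiv a := by
  cases a with
  | inl i =>
    unfold constVF eV
    rw [Finset.sum_eq_single i]
    · simp
    · intro j _ hj; simp [Pi.single_apply, hj.symm]
    · simp
  | inr i =>
    unfold constVF eV
    rw [Finset.sum_eq_single i]
    · simp
    · intro j _ hj; simp [Pi.single_apply, hj.symm]
    · simp

lemma constVF_X (n : ℕ) (p : (Fin n → ℂ) × (Fin n → ℂ)) (s : Fin n ⊕ Fin n) :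
    constVF n p (X s) = C (Sum.elim p.1 p.2 s) := by
  unfold constVF
  rw [Derivation.sum_apply']
  cases s with
  | inl j =>
    rw [Finset.sum_eq_single j]
    · simp [Algebra.smul_def, algebraMap_eq]
    · intro k _ hk
      simp [Derivation.add_apply, Derivation.smul_apply, Pi.single_apply, hk.symm]
    · simp
  | inr j =>
    rw [Finset.sum_eq_single j]
    · simp [Algebra.smul_def, algebraMap_eq]
    · intro k _ hk
      simp [Derivation.add_apply, Derivation.smul_apply, Pi.single_apply, hk.symm]
    · simp

lemma bracket_constVF (n : ℕ) (p q : (Fin n → ℂ) × (Fin n → ℂ)) :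
    ⁅constVF n p, constVF n q⁆ = 0 := by
  apply derivation_ext
  intro s
  rw [Derivation.commutator_apply, constVF_X, constVF_X]
  simp [derivation_C]

lemma constVF_smul (n : ℕ) (r : ℂ) (p : (Fin n → ℂ) × (Fin n → ℂ)) :
    constVF n (r • p) = r • constVF n p := by
  apply derivation_ext
  intro s
  rw [constVF_X, Derivation.smul_apply, constVF_X]
  cases s <;> simp [Algebra.smul_def, algebraMap_eq]

lemma hamVF_apply (n : ℕ) (f : PolyC2n n) : hamVF n f = ∑ i : Fin n,
    (pderiv (Sum.inl i) f • pderiv (Sum.inr i) - pderiv (Sum.inr i) f • pderiv (Sum.inl i)) :=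
  rfl

lemma hamVF_X_inl (n : ℕ) (f : PolyC2n n) (j : Fin n) :
    hamVF n f (X (Sum.inl j)) = - pderiv (Sum.inr j) f := by
  rw [hamVF_apply, Derivation.sum_apply']
  rw [Finset.sum_eq_single j]
  · simp
  · intro k _ hk
    simp [Derivation.sub_apply, Derivation.smul_apply, Pi.single_apply, hk.symm]
  · simp

lemma hamVF_X_inr (n : ℕ) (f : PolyC2n n) (j : Fin n) :
    hamVF n f (X (Sum.inr j)) = pderiv (Sum.inl j) f := by
  rw [hamVF_apply, Derivation.sum_apply']
  rw [Finset.sum_eq_single j]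
  · simp
  · intro k _ hk
    simp [Derivation.sub_apply, Derivation.smul_apply, Pi.single_apply, hk.symm]
  · simp

lemma pderiv_comm' {σ R : Type*} [CommSemiring R] [DecidableEq σ] (i j : σ)
    (p : MvPolynomial σ R) : pderiv i (pderiv j p) = pderiv j (pderiv i p) := by
  induction p using MvPolynomial.induction_on with
  | C a => simp
  | add p q hp hq => simp [hp, hq]
  | mul_X p s hp =>
    simp only [Derivation.leibniz, map_add, smul_eq_mul, pderiv_X, Pi.single_apply, mul_ite,
      mul_one, mul_zero, map_mul, map_one, map_zero, hp]
    split_ifs <;> simp (config := { failIfUnchanged := false }) [hp] <;> ring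

lemma bracket_smul_constVF (n : ℕ) (p q : (Fin n → ℂ) × (Fin n → ℂ)) (r : ℂ) :
    ⁅constVF n p, r • constVF n q⁆ = 0 := by
  apply derivation_ext
  intro s
  rw [Derivation.commutator_apply, Derivation.smul_apply, constVF_X]
  simp [derivation_C, constVF_X, Derivation.smul_apply]

lemma deriv_single' {n : ℕ} (D : Derivation ℂ (PolyC2n n) (PolyC2n n))
    (a s : Fin n ⊕ Fin n) : D (Pi.single (M := fun _ => PolyC2n n) a 1 s) = 0 := by
  rcases eq_or_ne s a with h | h
  · subst h; rw [Pi.single_eq_same]; exact D.map_one_eq_zero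
  · simp [Pi.single_apply, h]


/-- for `n ≥ 2`, `H²(g₋₁; h(2n)) ≠ 0`, with nonzero classes of order 1:
there is an alternating bilinear 2-cocycle `c : g₋₁ × g₋₁ → h(2n)` whose values are
constant-coefficient fields (i.e. lie in `g₋₁`) and which is not the coboundary of any
linear map `b : g₋₁ → h(2n)`. -/
theorem exists_ham_cocycle_not_coboundary (n : ℕ) (hn : 2 ≤ n) :
    ∃ c : ((Fin n → ℂ) × (Fin n → ℂ)) →ₗ[ℂ] ((Fin n → ℂ) × (Fin n → ℂ)) →ₗ[ℂ]
        Derivation ℂ (PolyC2n n) (PolyC2n n),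
      (∀ A, c A A = 0) ∧
      (∀ A B, c A B ∈ Set.range (constVF n)) ∧
      (∀ A B C : (Fin n → ℂ) × (Fin n → ℂ),
        ⁅constVF n A, c B C⁆ - ⁅constVF n B, c A C⁆ + ⁅constVF n C, c A B⁆ = 0) ∧
      ¬ ∃ b : ((Fin n → ℂ) × (Fin n → ℂ)) →ₗ[ℂ] Derivation ℂ (PolyC2n n) (PolyC2n n),
          (∀ A, b A ∈ hamAlg n) ∧
          ∀ A B, c A B = ⁅constVF n A, b B⁆ - ⁅constVF n B, b A⁆ := by
  set i0 : Fin n := ⟨0, by omega⟩ with hi0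
  set i1 : Fin n := ⟨1, by omega⟩ with hi1
  have hi01 : i1 ≠ i0 := by simp [hi0, hi1, Fin.ext_iff]
  set ω : ((Fin n → ℂ) × (Fin n → ℂ)) → ((Fin n → ℂ) × (Fin n → ℂ)) → ℂ :=
    fun A B => ∑ i : Fin n, (A.1 i * B.2 i - A.2 i * B.1 i) with hω
  set E : Derivation ℂ (PolyC2n n) (PolyC2n n) := constVF n (eV n (Sum.inl i0)) with hE
  refine ⟨LinearMap.mk₂ ℂ (fun A B => ω A B • E) ?_ ?_ ?_ ?_, ?_, ?_, ?_, ?_⟩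
  · intro A A' B
    have : ω (A + A') B = ω A B + ω A' B := by
      rw [hω]; dsimp only
      rw [← Finset.sum_add_distrib]
      exact Finset.sum_congr rfl fun i _ => by simp [Prod.fst_add, Prod.snd_add]; ring
    rw [this, add_smul]
  · intro r A B
    have : ω (r • A) B = r * ω A B := by
      rw [hω]; dsimp only
      rw [Finset.mul_sum]
      exact Finset.sum_congr rfl fun i _ => by simp [Prod.smul_fst, Prod.smul_snd]; ring
    rw [this, mul_smul]
  · intro A B B'
    have : ω A (B + B') = ω A B + ω A B' := by
      rw [hω]; dsimp only
      rw [← Finset.sum_add_distrib]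
      exact Finset.sum_congr rfl fun i _ => by simp [Prod.fst_add, Prod.snd_add]; ring
    rw [this, add_smul]
  · intro r A B
    have : ω A (r • B) = r * ω A B := by
      rw [hω]; dsimp only
      rw [Finset.mul_sum]
      exact Finset.sum_congr rfl fun i _ => by simp [Prod.smul_fst, Prod.smul_snd]; ring
    rw [this, mul_smul]
  · intro A
    have : ω A A = 0 := by
      rw [hω]; dsimp only
      exact Finset.sum_eq_zero fun i _ => by ring
    simp [this]
  · intro A B
    refine ⟨ω A B • eV n (Sum.inl i0), ?_⟩
    rw [constVF_smul]
    rfl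
  · intro A B C
    simp only [LinearMap.mk₂_apply, hE]
    rw [bracket_smul_constVF, bracket_smul_constVF, bracket_smul_constVF]
    simp
  · rintro ⟨b, hb1, hb2⟩
    -- the "matrix entries"
    set G : (Fin n ⊕ Fin n) → (Fin n ⊕ Fin n) → (Fin n ⊕ Fin n) → ℂ :=
      fun a t s => constantCoeff (pderiv t ((b (eV n a)) (X s))) with hG
    -- main coboundary equation on basis vectors
    have keyE : ∀ a b' s, G b' a s - G a b' s
        = ω (eV n a) (eV n b') * (if s = Sum.inl i0 then 1 else 0) := by
      intro a b' s
      have h := hb2 (eV n a) (eV n b')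
      have h' := congrArg (fun D : Derivation ℂ (PolyC2n n) (PolyC2n n) =>
        (constantCoeff (D (X s)) : ℂ)) h
      simp only [LinearMap.mk₂_apply, Derivation.sub_apply, Derivation.smul_apply, hE,
        constVF_eV, pderiv_X, Derivation.commutator_apply, map_sub] at h'
      rw [deriv_single', deriv_single'] at h'
      simp only [map_zero, sub_zero] at h'
      rw [smul_eq_C_mul, map_mul, constantCoeff_C] at h'
      have hsing : (constantCoeff (Pi.single (M := fun _ => PolyC2n n) (Sum.inl i0) 1 s) : ℂ)
          = if s = Sum.inl i0 then 1 else 0 := by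
        rcases eq_or_ne s (Sum.inl i0) with hh | hh <;> simp [Pi.single_apply, hh]
      rw [hsing] at h'
      rw [hG]
      dsimp only
      exact h'.symm
    have hR1 : ∀ (a : Fin n ⊕ Fin n) (i j : Fin n),
        G a (Sum.inr i) (Sum.inr j) = - G a (Sum.inl j) (Sum.inl i) := by
      intro a i j
      obtain ⟨f, hf⟩ := hb1 (eV n a)
      rw [hG]
      dsimp only
      rw [← hf, hamVF_X_inr, hamVF_X_inl, pderiv_comm']
      simp
    have hR2 : ∀ (a : Fin n ⊕ Fin n) (i j : Fin n),
        G a (Sum.inr i) (Sum.inl j) = G a (Sum.inr j) (Sum.inl i) := by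
      intro a i j
      obtain ⟨f, hf⟩ := hb1 (eV n a)
      rw [hG]
      dsimp only
      rw [← hf, hamVF_X_inl, hamVF_X_inl, map_neg, map_neg, map_neg, map_neg, pderiv_comm']
    have hω1 : ω (eV n (Sum.inl i1)) (eV n (Sum.inr i1)) = 1 := by
      rw [hω]
      simp [eV, Pi.single_apply]
    have E1 := keyE (Sum.inl i1) (Sum.inr i1) (Sum.inl i0)
    have E2 := keyE (Sum.inr i1) (Sum.inr i0) (Sum.inr i1)
    have E3 := keyE (Sum.inr i0) (Sum.inl i1) (Sum.inl i1)
    rw [if_pos rfl, mul_one, hω1] at E1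
    rw [if_neg (by simp), mul_zero] at E2
    rw [if_neg (by simp [hi01]), mul_zero] at E3
    have hA := hR1 (Sum.inr i1) i0 i1
    have hB := hR1 (Sum.inr i0) i1 i1
    have hC := hR2 (Sum.inl i1) i0 i1
    have contra : (1 : ℂ) = 0 := by linear_combination -E1 + E2 - E3 + hA - hB + hC
    exact one_ne_zero contra
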